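/- arXiv:1404.3915 — 4 statements merged into one kernel-verified Lean document; each statement's English description precedes it below -/
import Mathlib

section
/- The number of marked plane binary trees with n+2 leaves, i.e., plane binary trees with exactly one last branching vertex distinguished, is binomial(2n, n). -/
/-- Plane binary trees: every internal vertex has exactly two ordered children. -/
inductive PTree where
  | leaf : PTree
  | node : PTree → PTree → PTree
  deriving DecidableEq

namespace PTree

/-- number of leaves (endpoints) -/
def numLeaves : PTree → ℕ
  | leaf => 1
  | node l r => numLeaves l + numLeaves r

/-- directions of the leaves of a subtree which is itself a `b`-child
(`true` = left child, `false` = right child), in left-to-right order. -/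
def dirsAux : PTree → Bool → List Bool
  | leaf, b => [b]
  | node l r, _ => dirsAux l true ++ dirsAux r false

/-- the left/right-child directions of all leaves of a tree, left to right
(`true` = left child, `false` = right child). -/
def dirs : PTree → List Bool
  | leaf => []
  | node l r => dirsAux l true ++ dirsAux r false

/-- The reduction map `R`: the directions of the 2nd through (n+1)-th leaves;
`true` = • (occupied site, left child), `false` = ∘ (empty site, right child). -/
def red (T : PTree) : List Bool := ((dirs T).drop 1).dropLast

/-- number of internal vertices on the path from the leftmost leaf to the root
(root included). -/
def lCount : PTree → ℕ
  | leaf => 0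
  | node l _ => lCount l + 1

/-- number of internal vertices on the path from the rightmost leaf to the root
(root included). -/
def rCount : PTree → ℕ
  | leaf => 0
  | node _ r => rCount r + 1

/-- number of last branching vertices (internal vertices whose two children are leaves). -/
def lbCount : PTree → ℕ
  | leaf => 0
  | node leaf leaf => 1
  | node l r => lbCount l + lbCount r

end PTree

/-- Marked plane binary trees: a plane binary tree with exactly one of its
last branching vertices marked (the constructor `mark` is the marked vertex,
a vertex with two leaf children). -/
inductive MTree where
  | mark : MTree
  | nodeL : MTree → PTree → MTree
  | nodeR : PTree → MTree → MTree
  deriving DecidableEq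

namespace MTree

/-- forgetful map to plane binary trees -/
def forget : MTree → PTree
  | mark => .node .leaf .leaf
  | nodeL l r => .node (forget l) r
  | nodeR l r => .node l (forget r)

/-- collapse the marked vertex (with its two leaf children) to a single leaf. -/
def collapseT : MTree → PTree
  | mark => .leaf
  | nodeL l r => .node (collapseT l) r
  | nodeR l r => .node l (collapseT r)

/-- index (left to right, starting from 0) of the leaf of `collapseT` obtained
by collapsing the marked vertex. -/
def markIdx : MTree → ℕ
  | mark => 0
  | nodeL l _ => markIdx l
  | nodeR l r => l.numLeaves + markIdx r

end MTree

/-- replace the `i`-th leaf of a tree by a marked last branching vertex. -/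
def expand : PTree → ℕ → MTree
  | .leaf, _ => .mark
  | .node l r, i =>
      if i < l.numLeaves then .nodeL (expand l i) r
      else .nodeR l (expand r (i - l.numLeaves))

/-- index of the next right-child (`false`) leaf strictly after position `i`;
if there is none, the index of the rightmost left-child (`true`) leaf. -/
def nextFalseIdx (w : List Bool) (i : ℕ) : ℕ :=
  if (w.drop (i+1)).findIdx (fun b => !b) < (w.drop (i+1)).length
  then i + 1 + (w.drop (i+1)).findIdx (fun b => !b)
  else w.length - 1 - (w.reverse.findIdx (fun b => b))

/-- index of the closest left-child (`true`) leaf strictly before position `i`;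
if there is none, the index of the leftmost right-child (`false`) leaf. -/
def prevTrueIdx (w : List Bool) (i : ℕ) : ℕ :=
  if ((w.take i).reverse).findIdx (fun b => b) < i
  then i - 1 - ((w.take i).reverse).findIdx (fun b => b)
  else w.findIdx (fun b => !b)

/-- position of the leaf where the removed segment is re-glued by `π`. -/
def target (w : List Bool) (i : ℕ) : ℕ :=
  if w.getD i true then prevTrueIdx w i else nextFalseIdx w i

/-- The map `π` on marked trees: remove the segment joining the marked vertex to
its left (resp. right) leaf when the marked vertex is a right (resp. left) child,
and glue it to the next right- (resp. left-) child leaf to the right (resp. left),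
with the boundary rule when no such leaf exists; the new vertex is marked. -/
def piM (M : MTree) : MTree :=
  expand M.collapseT (target M.collapseT.dirs M.markIdx)

open Classical in
/-- Transition rates of the `n`-site open-boundary TASEP, on configurations
encoded as lists of booleans (`true` = •, `false` = ∘). -/
noncomputable def rate (α β : ℝ) (C C' : List Bool) : ℝ :=
  if ∃ A, C = false :: A ∧ C' = true :: A then α
  else if ∃ A, C = A ++ [true] ∧ C' = A ++ [false] then β
  else if ∃ A A', C = A ++ true :: false :: A' ∧ C' = A ++ false :: true :: A' then 1
  else 0

/-- number of active bonds of a configuration: injection at site 1 if empty,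
extraction at site n if occupied, and hops across •∘ pairs. -/
def activeCount (C : List Bool) : ℕ :=
  (if C.head? = some false then 1 else 0) +
  ((C.zip C.tail).count (true, false)) +
  (if C.getLast? = some true then 1 else 0)

/-- the weight `μ(T) = α^{-l(T)} β^{-r(T)}` of a plane binary tree. -/
noncomputable def mu (α β : ℝ) (T : PTree) : ℝ :=
  α ^ (-(T.lCount : ℤ)) * β ^ (-(T.rCount : ℤ))

/-- number of internal vertices on the path from the leftmost leaf to the root,
excluding the marked vertex. -/
def lCountM : MTree → ℕ
  | .mark => 0
  | .nodeL l _ => lCountM l + 1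
  | .nodeR l _ => l.lCount + 1

/-- number of internal vertices on the path from the rightmost leaf to the root,
excluding the marked vertex. -/
def rCountM : MTree → ℕ
  | .mark => 0
  | .nodeR _ r => rCountM r + 1
  | .nodeL _ r => r.rCount + 1

/-- the weight `μ̂` of a marked tree, excluding the marked vertex from the counts. -/
noncomputable def muHat (α β : ℝ) (M : MTree) : ℝ :=
  α ^ (-(lCountM M : ℤ)) * β ^ (-(rCountM M : ℤ))

/-! A marked tree with `n + 2` leaves is the same as a plane binary tree with `n + 1` leaves
together with one of its leaves: collapsing the marked vertex to a leaf and, conversely,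
expanding a chosen leaf into a marked last branching vertex are inverse operations.
Plane binary trees with `n + 1` leaves are counted by the Catalan number `C n`, and
`(n + 1) * C n = binomial(2n, n)`. -/

namespace PTree

def toBinaryTree : PTree → BinaryTree Unit
  | leaf => .nil
  | node l r => .node () l.toBinaryTree r.toBinaryTree

def ofBinaryTree : BinaryTree Unit → PTree
  | .nil => leaf
  | .node _ l r => node (ofBinaryTree l) (ofBinaryTree r)

def equivBinaryTree : PTree ≃ BinaryTree Unit where
  toFun := toBinaryTree
  invFun := ofBinaryTree
  left_inv T := by
    induction T with
    | leaf => rfl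
    | node l r ihl ihr => simp only [toBinaryTree, ofBinaryTree, ihl, ihr]
  right_inv t := by
    induction t with
    | nil => rfl
    | node _ l r ihl ihr => simp only [ofBinaryTree, toBinaryTree, ihl, ihr]

theorem numLeaves_toBinaryTree (T : PTree) : T.toBinaryTree.numLeaves = T.numLeaves := by
  induction T with
  | leaf => rfl
  | node l r ihl ihr => simp only [toBinaryTree, BinaryTree.numLeaves, numLeaves, ihl, ihr]

theorem card_numLeaves_eq_catalan (n : ℕ) :
    Nat.card {T : PTree // T.numLeaves = n + 1} = catalan n := by
  have e : {T : PTree // T.numLeaves = n + 1} ≃ BinaryTree.treesOfNumNodesEq n :=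
    equivBinaryTree.subtypeEquiv fun T => by
      change _ ↔ T.toBinaryTree ∈ _
      rw [BinaryTree.mem_treesOfNumNodesEq, ← numLeaves_toBinaryTree,
        BinaryTree.numLeaves_eq_numNodes_succ, Nat.add_right_cancel_iff]
  rw [Nat.card_congr e, Nat.card_eq_fintype_card, Fintype.card_coe,
    BinaryTree.treesOfNumNodesEq_card_eq_catalan]

end PTree

namespace MTree

theorem numLeaves_forget (M : MTree) : M.forget.numLeaves = M.collapseT.numLeaves + 1 := by
  induction M with
  | mark => rfl
  | nodeL l r ih | nodeR l r ih =>
    simp only [forget, collapseT, PTree.numLeaves, ih]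
    omega

theorem markIdx_lt (M : MTree) : M.markIdx < M.collapseT.numLeaves := by
  induction M with
  | mark => exact Nat.one_pos
  | nodeL l r ih | nodeR l r ih =>
    simp only [markIdx, collapseT, PTree.numLeaves]
    omega

theorem expand_collapseT_markIdx (M : MTree) : expand M.collapseT M.markIdx = M := by
  induction M with
  | mark => rfl
  | nodeL l r ih =>
    simp only [collapseT, markIdx, expand, if_pos (markIdx_lt l), ih]
  | nodeR l r ih =>
    simp only [collapseT, markIdx, expand, if_neg (Nat.not_lt.2 (Nat.le_add_right _ _)),
      Nat.add_sub_cancel_left, ih]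

end MTree

theorem collapseT_expand (T : PTree) (i : ℕ) : (expand T i).collapseT = T := by
  induction T generalizing i with
  | leaf => rfl
  | node l r ihl ihr =>
    simp only [expand]
    split <;> simp only [MTree.collapseT, ihl, ihr]

theorem markIdx_expand (T : PTree) {i : ℕ} (hi : i < T.numLeaves) : (expand T i).markIdx = i := by
  induction T generalizing i with
  | leaf => exact (Nat.lt_one_iff.1 hi).symm
  | node l r ihl ihr =>
    simp only [PTree.numLeaves] at hi
    simp only [expand]
    split
    case isTrue hl => exact ihl hl
    case isFalse hl =>
      simp only [MTree.markIdx, ihr (i := i - l.numLeaves) (by omega)]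
      omega

def markedEquivLeafChoice (n : ℕ) :
    {M : MTree // M.forget.numLeaves = n + 2} ≃ {T : PTree // T.numLeaves = n + 1} × Fin (n + 1) where
  toFun M :=
    have h : M.1.collapseT.numLeaves = n + 1 := by
      have := M.1.numLeaves_forget
      omega
    (⟨M.1.collapseT, h⟩, ⟨M.1.markIdx, h ▸ M.1.markIdx_lt⟩)
  invFun p := ⟨expand p.1.1 p.2, by rw [MTree.numLeaves_forget, collapseT_expand, p.1.2]⟩
  left_inv M := Subtype.ext M.1.expand_collapseT_markIdx
  right_inv := fun ⟨⟨T, hT⟩, i⟩ => by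
    ext
    · exact collapseT_expand T i
    · exact markIdx_expand T (by omega)

/-- the number of marked plane binary trees with `n+2` leaves is
`binomial(2n, n)`. -/
theorem markedTree_card (n : ℕ) :
    Nat.card {M : MTree // M.forget.numLeaves = n + 2} = Nat.choose (2 * n) n := by
  rw [Nat.card_congr (markedEquivLeafChoice n), Nat.card_prod, PTree.card_numLeaves_eq_catalan,
    Nat.card_fin, mul_comm, succ_mul_catalan_eq_centralBinom, Nat.centralBinom_eq_two_mul_choose]
end

section
/- The reduction map R : T_n → {•,∘}^n, which reads off for each of the 2nd through (n+1)-th leaves (in left-to-right order) whether it is a left child (•) or a right child (∘), is surjective. -/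
namespace PTree

/-- replace the leftmost leaf by a cherry -/
def grow : PTree → PTree
  | leaf => node leaf leaf
  | node l r => node (grow l) r

lemma numLeaves_grow (T : PTree) : (grow T).numLeaves = T.numLeaves + 1 := by
  induction T with
  | leaf => rfl
  | node l r ih _ => simp [grow, numLeaves, ih]; omega

lemma dirsAux_head_true (T : PTree) : ∃ t, dirsAux T true = true :: t := by
  induction T with
  | leaf => exact ⟨[], rfl⟩
  | node l r ihl _ =>
      obtain ⟨t, ht⟩ := ihl
      exact ⟨t ++ dirsAux r false, by simp [dirsAux, ht]⟩

lemma dirsAux_grow_true (T : PTree) :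
    dirsAux (grow T) true = true :: false :: (dirsAux T true).tail := by
  induction T with
  | leaf => rfl
  | node l r ihl _ =>
      obtain ⟨t, ht⟩ := dirsAux_head_true l
      simp [grow, dirsAux, ihl, ht]

/-- build a tree with prescribed reduction -/
def build : List Bool → PTree
  | [] => node leaf leaf
  | true :: w => node leaf (build w)
  | false :: w => grow (build w)

lemma build_spec (w : List Bool) :
    (build w).numLeaves = w.length + 2 ∧
    (build w).dirs = true :: w ++ [false] ∧
    ∃ l r, build w = node l r := by
  induction w with
  | nil => exact ⟨rfl, rfl, leaf, leaf, rfl⟩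
  | cons b w ih =>
      obtain ⟨hn, hd, l, r, he⟩ := ih
      cases b with
      | true =>
          refine ⟨by simp [build, numLeaves, hn]; omega, ?_, leaf, build w, rfl⟩
          have hax : (PTree.node .leaf (build w)).dirs = true :: (build w).dirs := by
            rw [he]; rfl
          simp only [build, hax, hd, List.cons_append]
      | false =>
          refine ⟨by simp [build, numLeaves_grow, hn], ?_, ?_⟩
          · obtain ⟨t, ht⟩ := dirsAux_head_true l
            have hd' : dirsAux l true ++ dirsAux r false = true :: w ++ [false] := by
              rw [he] at hd; exact hd
            rw [ht] at hd'
            simp only [List.cons_append] at hd'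
            have hd'' : t ++ dirsAux r false = w ++ [false] :=
              List.cons_injective hd'
            simp [build, he, grow, dirs, dirsAux_grow_true, ht, hd'']
          · exact ⟨grow l, r, by rw [build, he]; rfl⟩

end PTree

/-- the reduction map `R : T_n → {•,∘}^n` is surjective. -/
theorem red_surjective (n : ℕ) (C : Fin n → Bool) :
    ∃ T : PTree, T.numLeaves = n + 2 ∧ T.red = List.ofFn C := by
  obtain ⟨hn, hd, -⟩ := PTree.build_spec (List.ofFn C)
  refine ⟨PTree.build (List.ofFn C), by simpa using hn, ?_⟩
  simp [PTree.red, hd]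
end

section
/- For every plane binary tree T with n+2 leaves (n > 0), the last branching vertices of T are in bijection with the active bonds of the TASEP configuration R(T), where an active bond is either: position 1 if t_1 = ∘, position n (as right boundary) if t_n = •, or an internal pair (k,k+1) with t_k = • and t_{k+1} = ∘. -/
lemma List.eq_cons_dropLast_drop_one_append {α : Type*} {w : List α} {a c : α}
    (ha : w.head? = some a) (hc : w.getLast? = some c) (hac : a ≠ c) :
    w = a :: (w.drop 1).dropLast ++ [c] := by
  obtain ⟨t, rfl⟩ := List.head?_eq_some_iff.mp ha
  have ht : t ≠ [] := by rintro rfl; simp_all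
  rw [List.getLast?_cons, List.getLast?_eq_some_getLast ht, Option.getD_some,
    Option.some_inj] at hc
  simp [← hc, List.dropLast_append_getLast ht]

/-
The leaf directions of `T` read `true :: R(T) ++ [false]`, and a last branching vertex is exactly
a descent `true, false` of this word (a left leaf immediately followed by a right leaf). The
padding letters turn injection at site 1 and extraction at site `n` into descents as well, so both
sides count the descents of the same word.
-/

def descents : List Bool → ℕ
  | [] => 0
  | a :: w => descents w + if a = true ∧ w.head? = some false then 1 else 0

lemma count_zip_tail_eq_descents :
    ∀ C : List Bool, (C.zip C.tail).count (true, false) = descents C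
  | [] => rfl
  | [_] => by simp [descents]
  | a :: b :: w => by
    have ih := count_zip_tail_eq_descents (b :: w)
    simp only [List.tail_cons, List.zip_cons_cons, List.count_cons] at ih ⊢
    rw [ih]
    cases a <;> cases b <;> simp [descents]

lemma descents_append (u v : List Bool) :
    descents (u ++ v) = descents u + descents v +
      if u.getLast? = some true ∧ v.head? = some false then 1 else 0 := by
  induction u with
  | nil => simp [descents]
  | cons a u ih =>
    rw [List.cons_append, descents, ih, descents]
    cases u with
    | nil => simp [descents]
    | cons b u =>
      simp only [List.cons_append, List.head?_cons, Option.some.injEq, List.getLast?_cons_cons]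
      omega

lemma activeCount_eq_descents {w : List Bool} (hw : w ≠ []) :
    activeCount w = descents (true :: w ++ [false]) := by
  rw [List.cons_append, descents, descents_append, List.head?_append_of_ne_nil _ hw,
    activeCount, count_zip_tail_eq_descents]
  have h_false : descents [false] = 0 := rfl
  simp only [h_false, List.head?_cons, and_true, true_and]
  omega

namespace PTree

lemma length_dirsAux (t : PTree) (b : Bool) : (t.dirsAux b).length = t.numLeaves := by
  induction t generalizing b with
  | leaf => rfl
  | node l r ihl ihr => simp [dirsAux, numLeaves, ihl, ihr]

lemma head?_dirsAux_node (l r : PTree) (b : Bool) : ((node l r).dirsAux b).head? = some true := by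
  induction l generalizing r b with
  | leaf => rfl
  | node l₁ l₂ ih _ => rw [dirsAux, List.head?_append, ih]; rfl

lemma getLast?_dirsAux_node (l r : PTree) (b : Bool) :
    ((node l r).dirsAux b).getLast? = some false := by
  induction r generalizing l b with
  | leaf => simp [dirsAux]
  | node r₁ r₂ _ ih => rw [dirsAux, List.getLast?_append, ih]; rfl

lemma descents_dirsAux (t : PTree) (b : Bool) : descents (t.dirsAux b) = t.lbCount := by
  induction t generalizing b with
  | leaf => simp [dirsAux, descents, lbCount]
  | node l r ihl ihr =>
    rw [dirsAux, descents_append, ihl, ihr]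
    cases l <;> cases r <;> simp [lbCount, dirsAux.eq_1, head?_dirsAux_node, getLast?_dirsAux_node]

lemma dirs_node_eq_dirsAux (l r : PTree) (b : Bool) :
    (node l r).dirs = (node l r).dirsAux b := rfl

lemma dirs_node_eq_cons_red_append (l r : PTree) :
    (node l r).dirs = true :: (node l r).red ++ [false] :=
  List.eq_cons_dropLast_drop_one_append (head?_dirsAux_node l r true)
    (getLast?_dirsAux_node l r true) Bool.noConfusion

end PTree

/-- for `n > 0`, the last branching vertices of a tree `T ∈ T_n`
are in bijection with the active bonds of the configuration `R(T)`. -/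
theorem lastBranch_card_eq_activeBonds (n : ℕ) (hn : 0 < n) (T : PTree)
    (hT : T.numLeaves = n + 2) : T.lbCount = activeCount T.red := by
  cases T with
  | leaf => simp [PTree.numLeaves] at hT
  | node l r =>
    have hlen : (PTree.node l r).red.length = n := by
      have h := congrArg List.length (PTree.dirs_node_eq_cons_red_append l r)
      rw [PTree.dirs_node_eq_dirsAux l r true, PTree.length_dirsAux, hT] at h
      simpa using h.symm
    have hred : (PTree.node l r).red ≠ [] := List.ne_nil_of_length_pos (hlen ▸ hn)
    rw [activeCount_eq_descents hred, ← PTree.dirs_node_eq_cons_red_append,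
      PTree.dirs_node_eq_dirsAux l r true, PTree.descents_dirsAux]
end

section
/- For any configuration C ∈ {•,∘}^n, the number of marked plane binary trees \widehat{T} with n+2 leaves whose underlying tree reduces to C equals |R^{-1}{C}| times the number of active bonds of C; equivalently, |(R∘f)^{-1}{C}| = |R^{-1}{C}| · Σ_{C'} W(C → C') when α = β = 1. -/
/-!
Reading the leaves of a plane binary tree from left to right, two adjacent leaves are a left
child followed by a right child exactly when they are the two children of a last branching
vertex. For a tree with `n + 2` leaves the word of leaf directions is `• R(T) ∘`, so the number
of ways to mark `T` is the number of `•∘` factors of `•C∘` with `C = R(T)`: the two boundary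
factors are the possible entry and exit, the inner ones the possible hops. Summing over the
fibre `R⁻¹{C}` gives the first identity.

For `α = β = 1` every allowed transition has rate `1`, and the three kinds of transitions are
told apart by the change `+1`, `-1`, `0` in the number of particles, so the total outgoing rate
is the number of active bonds again.
-/

namespace List

def hopCount (w : List Bool) : ℕ := (w.zip w.tail).count (true, false)

@[simp] lemma hopCount_nil : hopCount [] = 0 := rfl

@[simp] lemma hopCount_singleton (a : Bool) : hopCount [a] = 0 := rfl

lemma hopCount_cons (a : Bool) (w : List Bool) :
    hopCount (a :: w) = (if a = true ∧ w.head? = some false then 1 else 0) + hopCount w := by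
  cases w with
  | nil => simp
  | cons b w =>
    simp only [hopCount, tail_cons, zip_cons_cons, count_cons, head?_cons]
    cases a <;> cases b <;> simp [Nat.add_comm]

lemma hopCount_append (v w : List Bool) :
    hopCount (v ++ w) = hopCount v + hopCount w +
      (if v.getLast? = some true ∧ w.head? = some false then 1 else 0) := by
  induction v with
  | nil => simp
  | cons a v ih =>
    rw [cons_append, hopCount_cons, ih, hopCount_cons]
    cases v with
    | nil => rcases w with _ | ⟨b, w⟩ <;> cases a <;> simp [add_comm]
    | cons b v => simp only [cons_append, head?_cons, getLast?_cons_cons]; ac_rfl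

end List

lemma activeCount_eq_hopCount (m : List Bool) :
    activeCount m = (if m.head? = some false then 1 else 0) + m.hopCount +
      (if m.getLast? = some true then 1 else 0) := rfl

lemma activeCount_eq_hopCount_cons_append {m : List Bool} (hm : m ≠ []) :
    activeCount m = (true :: (m ++ [false])).hopCount := by
  obtain rfl | ⟨s, b, rfl⟩ := m.eq_nil_or_concat
  · exact absurd rfl hm
  rw [activeCount_eq_hopCount, List.hopCount_cons, List.hopCount_append]
  rcases s with _ | ⟨a, s⟩ <;> cases b <;> simp <;> omega

namespace PTree

lemma numLeaves_pos (T : PTree) : 0 < T.numLeaves := by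
  induction T with
  | leaf => exact Nat.one_pos
  | node l r _ ihr => exact Nat.add_pos_right _ ihr

lemma length_dirsAux_s4 (T : PTree) (b : Bool) : (dirsAux T b).length = T.numLeaves := by
  induction T generalizing b with
  | leaf => rfl
  | node l r ihl ihr => simp [dirsAux, numLeaves, ihl, ihr]

lemma dirsAux_ne_nil (T : PTree) (b : Bool) : dirsAux T b ≠ [] :=
  List.ne_nil_of_length_pos (length_dirsAux_s4 T b ▸ numLeaves_pos T)

lemma head?_dirsAux (T : PTree) (b : Bool) :
    (dirsAux T b).head? = some (match T with | .leaf => b | .node _ _ => true) := by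
  induction T generalizing b with
  | leaf => rfl
  | node l r ihl _ =>
    rw [dirsAux, List.head?_append_of_ne_nil _ (dirsAux_ne_nil l true), ihl]
    cases l <;> rfl

lemma getLast?_dirsAux (T : PTree) (b : Bool) :
    (dirsAux T b).getLast? = some (match T with | .leaf => b | .node _ _ => false) := by
  induction T generalizing b with
  | leaf => rfl
  | node l r _ ihr =>
    rw [dirsAux, List.getLast?_append_of_ne_nil _ (dirsAux_ne_nil r false), ihr]
    cases r <;> rfl

lemma hopCount_dirsAux (T : PTree) (b : Bool) : (dirsAux T b).hopCount = T.lbCount := by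
  induction T generalizing b with
  | leaf => rfl
  | node l r ihl ihr =>
    rw [dirsAux, List.hopCount_append, ihl, ihr, getLast?_dirsAux, head?_dirsAux]
    cases l <;> cases r <;> simp [lbCount]

lemma head?_dirsAux_true (T : PTree) : (dirsAux T true).head? = some true :=
  (head?_dirsAux T true).trans (by cases T <;> rfl)

lemma getLast?_dirsAux_false (T : PTree) : (dirsAux T false).getLast? = some false :=
  (getLast?_dirsAux T false).trans (by cases T <;> rfl)

lemma dirs_node (l r : PTree) : (node l r).dirs = (node l r).dirsAux true := rfl

lemma dirs_node_eq (l r : PTree) :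
    (node l r).dirs = true :: ((node l r).red ++ [false]) := by
  obtain ⟨t, ht⟩ := List.head?_eq_some_iff.mp (head?_dirsAux_true l)
  obtain ⟨s, hs⟩ := List.getLast?_eq_some_iff.mp (getLast?_dirsAux_false r)
  simp [red, dirs, ht, hs]

lemma lbCount_eq_activeCount_red (T : PTree) (hT : 3 ≤ T.numLeaves) :
    T.lbCount = activeCount T.red := by
  obtain _ | ⟨l, r⟩ := T
  · simp [numLeaves] at hT
  have hred : (node l r).red ≠ [] := by
    have h := congrArg List.length (dirs_node_eq l r)
    rw [dirs_node, length_dirsAux_s4] at h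
    simp only [List.length_cons, List.length_append, List.length_nil] at h
    exact List.ne_nil_of_length_pos (by omega)
  rw [activeCount_eq_hopCount_cons_append hred, ← dirs_node_eq, dirs_node,
    hopCount_dirsAux]

lemma finite_setOf_numLeaves_eq (m : ℕ) : {T : PTree | T.numLeaves = m}.Finite := by
  induction m using Nat.strong_induction_on with
  | _ m ih =>
  have hsmall : (⋃ k ∈ Set.Iio m, {T : PTree | T.numLeaves = k}).Finite :=
    (Set.finite_Iio m).biUnion ih
  refine ((Set.finite_singleton leaf).union (hsmall.image2 node hsmall)).subset ?_
  rintro (_ | ⟨l, r⟩) hT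
  · exact Or.inl rfl
  · have := l.numLeaves_pos
    have := r.numLeaves_pos
    simp only [Set.mem_ofPred_eq, numLeaves] at hT
    exact Or.inr ⟨l, Set.mem_biUnion (Set.mem_Iio.mpr (by omega)) rfl,
      r, Set.mem_biUnion (Set.mem_Iio.mpr (by omega)) rfl, rfl⟩

end PTree

namespace MTree

@[simp] lemma forget_ne_leaf (M : MTree) : M.forget ≠ .leaf := by
  cases M <;> simp [forget]

@[simp] lemma leaf_ne_forget (M : MTree) : .leaf ≠ M.forget := M.forget_ne_leaf.symm

def markings : PTree → List MTree
  | .leaf => []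
  | .node .leaf .leaf => [.mark]
  | .node l r => (markings l).map (nodeL · r) ++ (markings r).map (nodeR l ·)

lemma mem_markings {M : MTree} {T : PTree} : M ∈ markings T ↔ M.forget = T := by
  induction M generalizing T with
  | mark => rcases T with _ | ⟨_ | _, _ | _⟩ <;> simp [markings, forget]
  | nodeL m r ih =>
    rcases T with _ | ⟨_ | _, _ | _⟩ <;>
      simp [markings, forget, ih, and_comm, eq_comm]
  | nodeR l m ih =>
    rcases T with _ | ⟨_ | _, _ | _⟩ <;>
      simp [markings, forget, ih, and_comm, eq_comm]

lemma nodup_markings (T : PTree) : (markings T).Nodup := by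
  induction T with
  | leaf => exact List.nodup_nil
  | node l r ihl ihr =>
    have hsplit : ((markings l).map (nodeL · r) ++ (markings r).map (nodeR l ·)).Nodup :=
      List.nodup_append.mpr ⟨ihl.map fun _ _ h => by simpa using h,
        ihr.map fun _ _ h => by simpa using h, by simp⟩
    rcases l with _ | _ <;> rcases r with _ | _
    · exact List.nodup_singleton _
    all_goals exact hsplit

lemma length_markings (T : PTree) : (markings T).length = T.lbCount := by
  induction T with
  | leaf => rfl
  | node l r ihl ihr =>
    rcases l with _ | _ <;> rcases r with _ | _ <;> simp [markings, PTree.lbCount, ihl, ihr]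

instance (T : PTree) : Finite {M : MTree // M.forget = T} :=
  (List.finite_toSet (markings T)).subset fun _ hM => mem_markings.mpr hM

lemma card_forget_fiber (T : PTree) : Nat.card {M : MTree // M.forget = T} = T.lbCount := by
  classical
  rw [← length_markings, ← List.toFinset_card_of_nodup (nodup_markings T),
    ← Nat.card_eq_finsetCard]
  exact Nat.card_congr (Equiv.subtypeEquivRight fun M => by rw [List.mem_toFinset, mem_markings])

end MTree

theorem Nat.card_subtype_comp_eq_mul {α β : Type*} (f : α → β) (p : β → Prop)
    [Finite (Subtype p)] [∀ b, Finite {a // f a = b}] (k : ℕ)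
    (hk : ∀ b, p b → Nat.card {a // f a = b} = k) :
    Nat.card {a // p (f a)} = Nat.card (Subtype p) * k := by
  have := Fintype.ofFinite (Subtype p)
  rw [← Nat.card_congr (Equiv.sigmaSubtypeFiberEquivSubtype f fun _ => Iff.rfl), Nat.card_sigma,
    Finset.sum_congr rfl fun (b : Subtype p) _ => hk b b.2, Finset.sum_const, smul_eq_mul,
    Finset.card_univ, Nat.card_eq_fintype_card]

theorem card_marked_fiber_eq_mul_activeCount (n : ℕ) (hn : 1 ≤ n) (w : List Bool) :
    Nat.card {M : MTree // M.forget.numLeaves = n + 2 ∧ M.forget.red = w}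
      = Nat.card {T : PTree // T.numLeaves = n + 2 ∧ T.red = w} * activeCount w := by
  have : Finite {T : PTree // T.numLeaves = n + 2 ∧ T.red = w} :=
    ((PTree.finite_setOf_numLeaves_eq (n + 2)).subset fun _ hT => hT.1).to_subtype
  refine Nat.card_subtype_comp_eq_mul MTree.forget (fun T => T.numLeaves = n + 2 ∧ T.red = w) _ ?_
  rintro T ⟨hT, rfl⟩
  rw [MTree.card_forget_fiber, T.lbCount_eq_activeCount_red (by omega)]

theorem List.card_filter_ofFn {α : Type*} [Fintype α] (n : ℕ) (P : List α → Prop)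
    [DecidablePred P] (hP : ∀ l, P l → l.length = n) :
    (Finset.univ.filter fun u : Fin n → α => P (List.ofFn u)).card = {l | P l}.ncard := by
  rw [← Set.ncard_coe_finset, ← Set.ncard_image_of_injective _ List.ofFn_injective]
  congr 1
  ext l
  simp only [Finset.coe_filter, Finset.mem_univ, true_and, Set.mem_image, Set.mem_ofPred_eq]
  constructor
  · rintro ⟨u, hu, rfl⟩
    exact hu
  · intro hl
    obtain rfl := hP l hl
    exact ⟨l.get, by rwa [List.ofFn_get], List.ofFn_get l⟩

namespace Tasep

def EntryStep (w u : List Bool) : Prop := ∃ A, w = false :: A ∧ u = true :: A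

def ExitStep (w u : List Bool) : Prop := ∃ A, w = A ++ [true] ∧ u = A ++ [false]

def HopStep (w u : List Bool) : Prop :=
  ∃ A A', w = A ++ true :: false :: A' ∧ u = A ++ false :: true :: A'

open Classical in
lemma rate_one_one (w u : List Bool) :
    rate 1 1 w u = if EntryStep w u ∨ ExitStep w u ∨ HopStep w u then 1 else 0 := by
  rw [ite_or, ite_or]
  rfl

lemma EntryStep.count_true {w u : List Bool} (h : EntryStep w u) :
    u.count true = w.count true + 1 := by
  obtain ⟨A, rfl, rfl⟩ := h
  simp

lemma ExitStep.count_true {w u : List Bool} (h : ExitStep w u) :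
    w.count true = u.count true + 1 := by
  obtain ⟨A, rfl, rfl⟩ := h
  simp

lemma HopStep.count_true {w u : List Bool} (h : HopStep w u) :
    u.count true = w.count true := by
  obtain ⟨A, A', rfl, rfl⟩ := h
  simp

lemma EntryStep.length_eq {w u : List Bool} (h : EntryStep w u) : u.length = w.length := by
  obtain ⟨A, rfl, rfl⟩ := h
  rfl

lemma ExitStep.length_eq {w u : List Bool} (h : ExitStep w u) : u.length = w.length := by
  obtain ⟨A, rfl, rfl⟩ := h
  simp

lemma HopStep.length_eq {w u : List Bool} (h : HopStep w u) : u.length = w.length := by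
  obtain ⟨A, A', rfl, rfl⟩ := h
  simp

lemma ncard_setOf_entryStep (w : List Bool) :
    {u | EntryStep w u}.ncard = if w.head? = some false then 1 else 0 := by
  rcases w with _ | ⟨_ | _, t⟩
  · simp [EntryStep]
  · have : {u | EntryStep (false :: t) u} = {true :: t} := by ext u; simp [EntryStep]
    simp [this]
  · simp [EntryStep]

lemma ncard_setOf_exitStep (w : List Bool) :
    {u | ExitStep w u}.ncard = if w.getLast? = some true then 1 else 0 := by
  obtain rfl | ⟨A, a, rfl⟩ := w.eq_nil_or_concat
  · simp [ExitStep]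
  rw [List.concat_eq_append]
  cases a
  · simp [ExitStep]
  · have : {u | ExitStep (A ++ [true]) u} = {A ++ [false]} := by ext u; simp [ExitStep]
    simp [this]

lemma finite_setOf_hopStep (w : List Bool) : {u | HopStep w u}.Finite :=
  (List.finite_length_eq Bool w.length).subset fun _ h => HopStep.length_eq h

lemma setOf_hopStep_cons (a : Bool) (w : List Bool) :
    {u | HopStep (a :: w) u} = (a :: ·) '' {u | HopStep w u} ∪
      {u | (a = true ∧ w.head? = some false) ∧ u = false :: true :: w.tail} := by
  ext u
  constructor
  · rintro ⟨_ | ⟨b, A⟩, A', hw, rfl⟩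
    · simp only [List.nil_append, List.cons.injEq] at hw
      obtain ⟨rfl, rfl⟩ := hw
      exact Or.inr ⟨⟨rfl, rfl⟩, rfl⟩
    · simp only [List.cons_append, List.cons.injEq] at hw
      obtain ⟨rfl, rfl⟩ := hw
      exact Or.inl ⟨_, ⟨A, A', rfl, rfl⟩, rfl⟩
  · rintro (⟨v, ⟨A, A', rfl, rfl⟩, rfl⟩ | ⟨⟨rfl, hw⟩, rfl⟩)
    · exact ⟨a :: A, A', rfl, rfl⟩
    · obtain ⟨t, rfl⟩ := List.head?_eq_some_iff.mp hw
      exact ⟨[], t, rfl, rfl⟩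

lemma ncard_setOf_hopStep (w : List Bool) : {u | HopStep w u}.ncard = w.hopCount := by
  induction w with
  | nil => simp [HopStep]
  | cons a w ih =>
    have hdisj : Disjoint ((a :: ·) '' {u | HopStep w u})
        {u | (a = true ∧ w.head? = some false) ∧ u = false :: true :: w.tail} := by
      refine Set.disjoint_left.mpr ?_
      rintro _ ⟨v, -, rfl⟩ ⟨⟨rfl, -⟩, h⟩
      simp at h
    have hfin : {u | (a = true ∧ w.head? = some false) ∧ u = false :: true :: w.tail}.Finite :=
      (Set.finite_singleton (false :: true :: w.tail)).subset fun _ h => h.2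
    rw [setOf_hopStep_cons, Set.ncard_union_eq hdisj ((finite_setOf_hopStep w).image _) hfin,
      Set.ncard_image_of_injective _ List.cons_injective, ih, List.hopCount_cons, add_comm]
    by_cases h : a = true ∧ w.head? = some false <;> simp [h]

theorem sum_rate_one_one (n : ℕ) (w : List Bool) (hw : w.length = n) :
    ∑ u : Fin n → Bool, rate 1 1 w (List.ofFn u) = activeCount w := by
  classical
  have hlen : ∀ u, EntryStep w u ∨ ExitStep w u ∨ HopStep w u → u.length = n := by
    rintro u (h | h | h) <;> exact hw ▸ h.length_eq
  have hentry : Disjoint {u | EntryStep w u} ({u | ExitStep w u} ∪ {u | HopStep w u}) := by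
    refine Set.disjoint_left.mpr ?_
    rintro u h₁ (h₂ | h₂) <;> have := h₁.count_true <;> have := h₂.count_true <;> omega
  have hexit : Disjoint {u | ExitStep w u} {u | HopStep w u} := by
    refine Set.disjoint_left.mpr fun u h₁ h₂ => ?_
    have := h₁.count_true
    have := h₂.count_true
    omega
  have hentry_fin : {u | EntryStep w u}.Finite :=
    (List.finite_length_eq Bool n).subset fun u h => hlen u (Or.inl h)
  have hexit_fin : {u | ExitStep w u}.Finite :=
    (List.finite_length_eq Bool n).subset fun u h => hlen u (Or.inr (Or.inl h))
  simp_rw [rate_one_one]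
  rw [Finset.sum_boole, List.card_filter_ofFn n _ hlen, Set.ofPred_or, Set.ofPred_or,
    Set.ncard_union_eq hentry hentry_fin (hexit_fin.union (finite_setOf_hopStep w)),
    Set.ncard_union_eq hexit hexit_fin (finite_setOf_hopStep w), ncard_setOf_entryStep,
    ncard_setOf_exitStep, ncard_setOf_hopStep, activeCount_eq_hopCount]
  push_cast
  ring

end Tasep

/-- `|(R∘f)^{-1}{C}| = |R^{-1}{C}| ·` (number of active bonds of `C`),
and for `α = β = 1` the number of active bonds equals `Σ_{C'} W(C → C')`. -/
theorem marked_fiber_card (n : ℕ) (hn : 1 ≤ n) (C : Fin n → Bool) :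
    Nat.card {M : MTree // M.forget.numLeaves = n + 2 ∧ M.forget.red = List.ofFn C}
        = Nat.card {T : PTree // T.numLeaves = n + 2 ∧ T.red = List.ofFn C} *
            activeCount (List.ofFn C) ∧
    (activeCount (List.ofFn C) : ℝ)
        = ∑ C' : Fin n → Bool, rate 1 1 (List.ofFn C) (List.ofFn C') :=
  ⟨card_marked_fiber_eq_mul_activeCount n hn (List.ofFn C),
    (Tasep.sum_rate_one_one n (List.ofFn C) List.length_ofFn).symm⟩
end
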